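/- Let X_{0:n−1} be drawn from an ergodic time-homogeneous Markov chain on the finite state space E = {1, …, K} with transition matrix P whose Dobrushin coefficient satisfies r < 1, started from an arbitrary initial distribution ϱ, and let π denote the stationary distribution. Let π̂_i(X_{0:n−1}) = (1/n)Σ_{k=0}^{n−1} 1(X_k = i) and fix p ≥ 1. Then for every ε > E_π[‖π̂(X_{0:n−1}) − π‖_p]: P_ϱ(‖π̂(X_{0:n−1}) − π‖_p ≥ ε) ≤ ‖ϱ/π‖_{2,π} · exp(−2^{−2/p} n (ε − E_π[‖π̂(X_{0:n−1}) − π‖_p])² (1−r)²). -/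

import Mathlib

open Finset
open scoped ENNReal Classical BigOperators

/-- Probability mass of a trajectory `x : Fin n → Fin K` under the Markov chain with
initial distribution `ρ` and transition matrix `Pm`:
`ρ (x 0) * ∏_{k=0}^{n-2} Pm (x k) (x (k+1))`. -/
noncomputable def chainMass {K n : ℕ} (ρ : Fin K → ℝ) (Pm : Fin K → Fin K → ℝ)
    (x : Fin n → Fin K) : ℝ :=
  (if h : 0 < n then ρ (x ⟨0, h⟩) else 1) *
    ∏ k : Fin (n - 1),
      Pm (x ⟨k.1, by have := k.2; omega⟩) (x ⟨k.1 + 1, by have := k.2; omega⟩)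

/-- Probability of a set of trajectories under the Markov chain `(Pm, ρ)`. -/
noncomputable def chainProb {K n : ℕ} (ρ : Fin K → ℝ) (Pm : Fin K → Fin K → ℝ)
    (s : Set (Fin n → Fin K)) : ℝ :=
  ∑ x : Fin n → Fin K, if x ∈ s then chainMass ρ Pm x else 0

/-- Expectation of `g` under the Markov chain `(Pm, ρ)`. -/
noncomputable def chainExp {K n : ℕ} (ρ : Fin K → ℝ) (Pm : Fin K → Fin K → ℝ)
    (g : (Fin n → Fin K) → ℝ) : ℝ :=
  ∑ x : Fin n → Fin K, chainMass ρ Pm x * g x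

/-- The nonstationarity index `‖ϱ/π‖_{2,π} = (∑_i ϱ(i)²/π(i))^{1/2}`. -/
noncomputable def nsIndex {K : ℕ} (ϱ π : Fin K → ℝ) : ℝ :=
  Real.sqrt (∑ i, ϱ i ^ 2 / π i)

/-- The empirical measure `π̂_i(x) = (1/n) ∑_{k} 1(x_k = i)`. -/
noncomputable def empMeas {K n : ℕ} (x : Fin n → Fin K) : Fin K → ℝ :=
  fun i => (∑ k : Fin n, if x k = i then (1 : ℝ) else 0) / n

/-- The `ℓ_p` norm on `ℝ^K` (for a real exponent `p ≥ 1`). -/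
noncomputable def lpNorm {K : ℕ} (p : ℝ) (y : Fin K → ℝ) : ℝ :=
  (∑ i, |y i| ^ p) ^ (1 / p)

/-- The Dobrushin (contraction) coefficient `max_{i,j} (1/2) ∑_k |P_{ik} - P_{jk}|`. -/
noncomputable def dobrushin {K : ℕ} (Pm : Fin K → Fin K → ℝ) : ℝ :=
  ⨆ i, ⨆ j, (1 / 2) * ∑ l, |Pm i l - Pm j l|




section Chain
variable {K : ℕ} (Pm : Fin K → Fin K → ℝ)

lemma chainMass_zero (ρ : Fin K → ℝ) (x : Fin 0 → Fin K) : chainMass ρ Pm x = 1 := by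
  simp [chainMass]

lemma chainMass_cons (ρ : Fin K → ℝ) (a : Fin K) {n : ℕ} (y : Fin n → Fin K) :
    chainMass ρ Pm (Fin.cons a y) = ρ a * chainMass (Pm a) Pm y := by
  cases n with
  | zero => simp [chainMass]
  | succ m =>
    rw [chainMass, chainMass, dif_pos (Nat.succ_pos (m + 1)), dif_pos (Nat.succ_pos m)]
    have hps := Fin.prod_univ_succ (fun k : Fin (m + 1) =>
      Pm ((Fin.cons a y : Fin (m + 2) → Fin K) ⟨k.1, by omega⟩)
         ((Fin.cons a y : Fin (m + 2) → Fin K) ⟨k.1 + 1, by omega⟩))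
    calc ρ ((Fin.cons a y : Fin (m+2) → Fin K) ⟨0, by omega⟩) *
          (∏ k : Fin (m + 1 + 1 - 1),
            Pm ((Fin.cons a y : Fin (m+2) → Fin K) ⟨k.1, by have := k.2; omega⟩)
               ((Fin.cons a y : Fin (m+2) → Fin K) ⟨k.1 + 1, by have := k.2; omega⟩))
        = ρ a * ((fun k : Fin (m + 1) =>
            Pm ((Fin.cons a y : Fin (m + 2) → Fin K) ⟨k.1, by omega⟩)
               ((Fin.cons a y : Fin (m + 2) → Fin K) ⟨k.1 + 1, by omega⟩)) 0 *
            ∏ k : Fin m, (fun k : Fin (m + 1) =>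
            Pm ((Fin.cons a y : Fin (m + 2) → Fin K) ⟨k.1, by omega⟩)
               ((Fin.cons a y : Fin (m + 2) → Fin K) ⟨k.1 + 1, by omega⟩)) k.succ) := by
          rw [← hps]; rfl
      _ = ρ a * (Pm a (y ⟨0, Nat.succ_pos m⟩) *
            ∏ k : Fin (m + 1 - 1), Pm (y ⟨k.1, by have := k.2; omega⟩)
              (y ⟨k.1 + 1, by have := k.2; omega⟩)) := by
          exact Eq.refl (ρ a * (Pm a (y ⟨0, Nat.succ_pos m⟩) *
            ∏ k : Fin (m + 1 - 1), Pm (y ⟨k.1, by have := k.2; omega⟩)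
              (y ⟨k.1 + 1, by have := k.2; omega⟩)))


lemma chainExp_zero (ρ : Fin K → ℝ) (g : (Fin 0 → Fin K) → ℝ) :
    chainExp ρ Pm g = g (fun i => i.elim0) := by
  rw [chainExp]
  rw [Fintype.sum_unique]
  rw [chainMass_zero, one_mul]
  congr

lemma chainExp_succ (ρ : Fin K → ℝ) {n : ℕ} (g : (Fin (n + 1) → Fin K) → ℝ) :
    chainExp ρ Pm g = ∑ a, ρ a * chainExp (Pm a) Pm (fun y => g (Fin.cons a y)) := by
  rw [chainExp]
  rw [← Equiv.sum_comp (Fin.consEquiv (fun _ => Fin K))]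
  rw [Fintype.sum_prod_type]
  refine Finset.sum_congr rfl fun a _ => ?_
  rw [chainExp, Finset.mul_sum]
  refine Finset.sum_congr rfl fun y _ => ?_
  show chainMass ρ Pm (Fin.cons a y) * g (Fin.cons a y) = _
  rw [chainMass_cons]
  ring

lemma chainMass_nonneg (ρ : Fin K → ℝ) (hρ : ∀ i, 0 ≤ ρ i) (hP : ∀ i j, 0 ≤ Pm i j)
    {n : ℕ} (x : Fin n → Fin K) : 0 ≤ chainMass ρ Pm x := by
  rw [chainMass]
  refine mul_nonneg ?_ (Finset.prod_nonneg fun k _ => hP _ _)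
  split <;> simp [hρ]

lemma chainExp_const (hProw : ∀ i, ∑ j, Pm i j = 1) {n : ℕ} :
    ∀ (ρ : Fin K → ℝ), (∑ i, ρ i = 1) → ∀ (c : ℝ), chainExp ρ Pm (fun _ : Fin n → Fin K => c) = c := by
  induction n with
  | zero => intro ρ hρ c; rw [chainExp_zero]
  | succ m ih =>
    intro ρ hρ c
    rw [chainExp_succ]
    simp only [ih (Pm _) (hProw _) c]
    rw [← Finset.sum_mul, hρ, one_mul]

lemma chainExp_mono (ρ : Fin K → ℝ) (hρ : ∀ i, 0 ≤ ρ i) (hP : ∀ i j, 0 ≤ Pm i j)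
    {n : ℕ} (g g' : (Fin n → Fin K) → ℝ) (h : ∀ x, g x ≤ g' x) :
    chainExp ρ Pm g ≤ chainExp ρ Pm g' :=
  Finset.sum_le_sum fun x _ =>
    mul_le_mul_of_nonneg_left (h x) (chainMass_nonneg Pm ρ hρ hP x)

lemma chainExp_sub (ρ : Fin K → ℝ) {n : ℕ} (g g' : (Fin n → Fin K) → ℝ) :
    chainExp ρ Pm (fun x => g x - g' x) = chainExp ρ Pm g - chainExp ρ Pm g' := by
  rw [chainExp, chainExp, chainExp, ← Finset.sum_sub_distrib]
  exact Finset.sum_congr rfl fun x _ => by ring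

end Chain


lemma hoeffding_core (q : ℝ) (hq0 : 0 ≤ q) (hq1 : q ≤ 1) (h : ℝ) :
    1 - q + q * Real.exp h ≤ Real.exp (q * h + h ^ 2 / 8) := by
  set D : ℝ → ℝ := fun s => 1 - q + q * Real.exp s with hDdef
  have hD : ∀ s, 0 < D s := by
    intro s
    rcases eq_or_lt_of_le hq0 with h0 | h0
    · simp [hDdef, ← h0]
    · have := Real.exp_pos s
      have : 0 < q * Real.exp s := by positivity
      simp only [hDdef]; linarith
  set g1 : ℝ → ℝ := fun s => q + s / 4 - q * Real.exp s / D s with hg1def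
  set g : ℝ → ℝ := fun s => q * s + s ^ 2 / 8 - Real.log (D s) with hgdef
  have hDderiv : ∀ s, HasDerivAt D (q * Real.exp s) s := by
    intro s
    exact ((Real.hasDerivAt_exp s).const_mul q).const_add (1 - q)
  have hgderiv : ∀ s, HasDerivAt g (g1 s) s := by
    intro s
    have h1 : HasDerivAt (fun s : ℝ => q * s + s ^ 2 / 8) (q + 2 * s / 8) s := by
      have := ((hasDerivAt_id s).const_mul q).add
        (((hasDerivAt_id s).pow 2).div_const 8)
      exact this.congr_deriv (by norm_num)
    have h2 : HasDerivAt (fun s => Real.log (D s)) (q * Real.exp s / D s) s :=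
      (hDderiv s).log (ne_of_gt (hD s))
    have := h1.sub h2
    exact this.congr_deriv (by simp only [hg1def]; ring)
  have hg1deriv : ∀ s, HasDerivAt g1 (1 / 4 - q * (1 - q) * Real.exp s / (D s) ^ 2) s := by
    intro s
    have hnum : HasDerivAt (fun s => q * Real.exp s) (q * Real.exp s) s :=
      (Real.hasDerivAt_exp s).const_mul q
    have hdiv : HasDerivAt (fun s => q * Real.exp s / D s)
        ((q * Real.exp s * D s - q * Real.exp s * (q * Real.exp s)) / (D s) ^ 2) s :=
      hnum.div (hDderiv s) (ne_of_gt (hD s))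
    have h1 : HasDerivAt (fun s : ℝ => q + s / 4) (1 / 4) s := by
      simpa using (hasDerivAt_id s).div_const 4 |>.const_add q
    have := h1.sub hdiv
    refine this.congr_deriv ?_
    have hD2 : (D s) ^ 2 ≠ 0 := pow_ne_zero 2 (ne_of_gt (hD s))
    field_simp [hDdef]
    ring
  have hg1mono : Monotone g1 := by
    apply monotone_of_deriv_nonneg (fun s => (hg1deriv s).differentiableAt)
    intro s
    rw [(hg1deriv s).deriv]
    have hAM : q * (1 - q) * Real.exp s ≤ (D s) ^ 2 / 4 := by
      have he := Real.exp_pos s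
      have : 0 ≤ ((1 - q) - q * Real.exp s) ^ 2 := sq_nonneg _
      simp only [hDdef]
      nlinarith
    have hD2 : (0:ℝ) < (D s) ^ 2 := pow_pos (hD s) 2
    rw [sub_nonneg, div_le_iff₀ hD2]
    linarith [hAM, (div_le_iff₀ (by norm_num : (0:ℝ) < 4)).mp (le_refl ((D s)^2/4))]
  have hg10 : g1 0 = 0 := by
    simp [hg1def, hDdef]
  have hg0 : g 0 = 0 := by
    simp [hgdef, hDdef]
  have hgnonneg : 0 ≤ g h := by
    rcases le_total 0 h with hh | hh
    · have hmono : MonotoneOn g (Set.Ici 0) := by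
        apply monotoneOn_of_deriv_nonneg (convex_Ici 0)
        · exact fun s _ => (hgderiv s).differentiableAt.continuousAt.continuousWithinAt
        · exact fun s _ => (hgderiv s).differentiableAt.differentiableWithinAt
        · intro s hs
          rw [(hgderiv s).deriv]
          rw [interior_Ici] at hs
          have := hg1mono (le_of_lt hs)
          rw [hg10] at this; linarith
      have := hmono (Set.self_mem_Ici) (Set.mem_Ici.mpr hh) hh
      rw [hg0] at this; exact this
    · have hanti : AntitoneOn g (Set.Iic 0) := by
        apply antitoneOn_of_deriv_nonpos (convex_Iic 0)
        · exact fun s _ => (hgderiv s).differentiableAt.continuousAt.continuousWithinAt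
        · exact fun s _ => (hgderiv s).differentiableAt.differentiableWithinAt
        · intro s hs
          rw [(hgderiv s).deriv]
          rw [interior_Iic] at hs
          have := hg1mono (le_of_lt hs)
          rw [hg10] at this; linarith
      have := hanti (Set.mem_Iic.mpr hh) (Set.self_mem_Iic) hh
      rw [hg0] at this; exact this
  have hlog : Real.log (D h) ≤ q * h + h ^ 2 / 8 := by
    simp only [hgdef] at hgnonneg; linarith
  calc D h = Real.exp (Real.log (D h)) := (Real.exp_log (hD h)).symm
    _ ≤ Real.exp (q * h + h ^ 2 / 8) := Real.exp_le_exp.mpr hlog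

lemma finHoeffding {ι : Type*} [Fintype ι] (w v : ι → ℝ) (hw : ∀ i, 0 ≤ w i)
    (hw1 : ∑ i, w i = 1) (m L t : ℝ) (hL : 0 ≤ L)
    (hv : ∀ i, m ≤ v i ∧ v i ≤ m + L) :
    ∑ i, w i * Real.exp (t * v i) ≤
      Real.exp (t * (∑ i, w i * v i) + t ^ 2 * L ^ 2 / 8) := by
  rcases eq_or_lt_of_le hL with hL0 | hL0
  · have hvm : ∀ i, v i = m := fun i => le_antisymm
      (by have := (hv i).2; rw [← hL0] at this; simpa using this) (hv i).1
    simp only [hvm, ← Finset.sum_mul, hw1, one_mul, ← hL0]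
    norm_num
  · set μ := ∑ i, w i * v i with hμdef
    have hμlb : m ≤ μ := by
      calc m = ∑ i, w i * m := by rw [← Finset.sum_mul, hw1, one_mul]
        _ ≤ μ := Finset.sum_le_sum fun i _ => mul_le_mul_of_nonneg_left (hv i).1 (hw i)
    have hμub : μ ≤ m + L := by
      calc μ ≤ ∑ i, w i * (m + L) := Finset.sum_le_sum fun i _ =>
              mul_le_mul_of_nonneg_left (hv i).2 (hw i)
        _ = m + L := by rw [← Finset.sum_mul, hw1, one_mul]
    set A := Real.exp (t * m) with hA
    set B := Real.exp (t * (m + L)) with hB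
    have hconv : ∀ i, Real.exp (t * v i) ≤
        ((m + L - v i) / L) * A + ((v i - m) / L) * B := by
      intro i
      have hs0 : 0 ≤ (v i - m) / L := div_nonneg (by linarith [(hv i).1]) hL
      have hs1 : 0 ≤ (m + L - v i) / L := div_nonneg (by linarith [(hv i).2]) hL
      have hsum : (m + L - v i) / L + (v i - m) / L = 1 := by field_simp; ring
      have := convexOn_exp.2 (Set.mem_univ (t * m)) (Set.mem_univ (t * (m + L))) hs1 hs0 hsum
      simp only [smul_eq_mul] at this
      convert this using 2
      · rfl
      field_simp; ring
    have hexpand : ∀ i, w i * (((m + L - v i) / L) * A + ((v i - m) / L) * B) =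
        (A / L) * (w i * (m + L)) - (A / L) * (w i * v i) +
        ((B / L) * (w i * v i) - (B / L) * (w i * m)) := by
      intro i; field_simp
    have hstep : ∑ i, w i * Real.exp (t * v i) ≤
        ((m + L - μ) / L) * A + ((μ - m) / L) * B := by
      calc ∑ i, w i * Real.exp (t * v i)
          ≤ ∑ i, w i * (((m + L - v i) / L) * A + ((v i - m) / L) * B) :=
            Finset.sum_le_sum fun i _ => mul_le_mul_of_nonneg_left (hconv i) (hw i)
        _ = (A / L) * (∑ i, w i * (m + L)) - (A / L) * μ +
            ((B / L) * μ - (B / L) * (∑ i, w i * m)) := by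
            rw [Finset.sum_congr rfl (fun i _ => hexpand i)]
            rw [Finset.sum_add_distrib, Finset.sum_sub_distrib, Finset.sum_sub_distrib,
              ← Finset.mul_sum, ← Finset.mul_sum, ← Finset.mul_sum, ← Finset.mul_sum]
        _ = ((m + L - μ) / L) * A + ((μ - m) / L) * B := by
            rw [← Finset.sum_mul, ← Finset.sum_mul, hw1, one_mul, one_mul]
            field_simp
    set q := (μ - m) / L with hq
    have hq0 : 0 ≤ q := div_nonneg (by linarith) hL
    have hq1 : q ≤ 1 := by rw [hq, div_le_one hL0]; linarith
    have h1q : (m + L - μ) / L = 1 - q := by rw [hq]; field_simp; ring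
    have hcore := hoeffding_core q hq0 hq1 (t * L)
    calc ∑ i, w i * Real.exp (t * v i) ≤ (1 - q) * A + q * B := by rw [← h1q]; exact hstep
      _ = A * (1 - q + q * Real.exp (t * L)) := by
          rw [hB, hA]
          rw [show t * (m + L) = t * m + t * L by ring, Real.exp_add]
          ring
      _ ≤ A * Real.exp (q * (t * L) + (t * L) ^ 2 / 8) :=
          mul_le_mul_of_nonneg_left hcore (le_of_lt (Real.exp_pos _))
      _ = Real.exp (t * μ + t ^ 2 * L ^ 2 / 8) := by
          rw [hA, ← Real.exp_add]
          congr 1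
          rw [hq]
          field_simp
          ring

lemma pairing {ι : Type*} [Fintype ι] [Nonempty ι] (μ ν f : ι → ℝ) (r' B : ℝ)
    (hTV : ∑ i, |μ i - ν i| ≤ 2 * r') (hosc : ∀ i j, f i - f j ≤ B)
    (hμ : ∑ i, μ i = 1) (hν : ∑ i, ν i = 1) :
    ∑ i, (μ i - ν i) * f i ≤ r' * B := by
  have hB : 0 ≤ B := by have := hosc (Classical.arbitrary ι) (Classical.arbitrary ι); linarith
  set S := Finset.univ.image f with hS
  have hSne : S.Nonempty := ⟨f (Classical.arbitrary ι), Finset.mem_image_of_mem f (mem_univ _)⟩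
  set m := S.min' hSne with hm
  obtain ⟨i0, -, hi0⟩ := Finset.mem_image.mp (S.min'_mem hSne)
  have hlb : ∀ i, m ≤ f i := fun i => S.min'_le (f i) (Finset.mem_image_of_mem f (mem_univ _))
  have hub : ∀ i, f i ≤ m + B := by
    intro i
    have := hosc i i0
    rw [hi0] at this
    linarith
  have key : ∑ i, (μ i - ν i) * f i = ∑ i, (μ i - ν i) * (f i - (m + B / 2)) := by
    rw [← sub_eq_zero, ← Finset.sum_sub_distrib]
    have : ∀ i, (μ i - ν i) * f i - (μ i - ν i) * (f i - (m + B / 2)) =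
        (m + B / 2) * (μ i - ν i) := by intro i; ring
    rw [Finset.sum_congr rfl fun i _ => this i, ← Finset.mul_sum, Finset.sum_sub_distrib,
      hμ, hν]
    ring
  rw [key]
  calc ∑ i, (μ i - ν i) * (f i - (m + B / 2))
      ≤ ∑ i, |μ i - ν i| * (B / 2) := by
        refine Finset.sum_le_sum fun i _ => ?_
        calc (μ i - ν i) * (f i - (m + B / 2)) ≤ |(μ i - ν i) * (f i - (m + B / 2))| := le_abs_self _
          _ = |μ i - ν i| * |f i - (m + B / 2)| := abs_mul _ _
          _ ≤ |μ i - ν i| * (B / 2) := by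
              refine mul_le_mul_of_nonneg_left ?_ (abs_nonneg _)
              rw [abs_le]
              constructor <;> [linarith [hlb i]; linarith [hub i]]
    _ = (∑ i, |μ i - ν i|) * (B / 2) := by rw [Finset.sum_mul]
    _ ≤ 2 * r' * (B / 2) := mul_le_mul_of_nonneg_right hTV (by linarith)
    _ = r' * B := by ring

def Lip1 {K n : ℕ} (c : ℝ) (g : (Fin n → Fin K) → ℝ) : Prop :=
  ∀ x y : Fin n → Fin K, ∀ k : Fin n, (∀ j, j ≠ k → x j = y j) → g x - g y ≤ c

lemma Lip1.cons {K n : ℕ} {c : ℝ} {g : (Fin (n + 1) → Fin K) → ℝ} (hg : Lip1 c g)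
    (a : Fin K) : Lip1 c (fun y : Fin n → Fin K => g (Fin.cons a y)) := by
  intro x y k hxy
  refine hg _ _ k.succ ?_
  intro j hj
  induction j using Fin.cases with
  | zero => simp
  | succ i =>
    have hik : i ≠ k := fun h => hj (by rw [h])
    simp [Fin.cons_succ, hxy i hik]

lemma Lip1.cons_diff {K n : ℕ} {c : ℝ} {g : (Fin (n + 1) → Fin K) → ℝ} (hg : Lip1 c g)
    (a b : Fin K) (y : Fin n → Fin K) : g (Fin.cons a y) - g (Fin.cons b y) ≤ c := by
  refine hg _ _ 0 ?_
  intro j hj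
  induction j using Fin.cases with
  | zero => exact absurd rfl hj
  | succ i => simp [Fin.cons_succ]

section Main
variable {K : ℕ} (Pm : Fin K → Fin K → ℝ)

lemma osc_le (hK : 0 < K) (hP : ∀ i j, 0 ≤ Pm i j) (hProw : ∀ i, ∑ j, Pm i j = 1)
    (r : ℝ) (hrTV : ∀ i j, ∑ l, |Pm i l - Pm j l| ≤ 2 * r) (hr1 : r < 1)
    {c : ℝ} (hc : 0 ≤ c) :
    ∀ (n : ℕ) (g : (Fin (n + 1) → Fin K) → ℝ), Lip1 c g → ∀ a b,
      chainExp (Pm a) Pm (fun y => g (Fin.cons a y)) -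
        chainExp (Pm b) Pm (fun y => g (Fin.cons b y)) ≤ c / (1 - r) := by
  have : Nonempty (Fin K) := ⟨⟨0, hK⟩⟩
  have hr0 : 0 ≤ r := by
    have := hrTV ⟨0, hK⟩ ⟨0, hK⟩
    simp at this
    linarith
  have h1r : 0 < 1 - r := by linarith
  intro n
  induction n with
  | zero =>
    intro g hg a b
    rw [chainExp_zero, chainExp_zero]
    have h1 : g (Fin.cons a fun i => i.elim0) - g (Fin.cons b fun i => i.elim0) ≤ c :=
      hg.cons_diff a b _
    have h2 : c ≤ c / (1 - r) := by
      rw [le_div_iff₀ h1r]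
      nlinarith
    linarith
  | succ m ih =>
    intro g hg a b
    rw [chainExp_succ, chainExp_succ]
    set H : Fin K → Fin K → ℝ := fun u y =>
      chainExp (Pm y) Pm (fun z => g (Fin.cons u (Fin.cons y z))) with hH
    have hsplit : (∑ y, Pm a y * H a y) - ∑ y, Pm b y * H b y =
        (∑ y, Pm a y * (H a y - H b y)) + ∑ y, (Pm a y - Pm b y) * H b y := by
      rw [← Finset.sum_add_distrib, ← Finset.sum_sub_distrib]
      exact Finset.sum_congr rfl fun y _ => by ring
    have hterm1 : (∑ y, Pm a y * (H a y - H b y)) ≤ c := by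
      have hdiff : ∀ y, H a y - H b y ≤ c := by
        intro y
        rw [hH, ← chainExp_sub]
        calc (chainExp (Pm y) Pm
              (fun z => g (Fin.cons a (Fin.cons y z)) - g (Fin.cons b (Fin.cons y z))))
            ≤ chainExp (Pm y) Pm (fun _ : Fin m → Fin K => c) :=
              chainExp_mono Pm (Pm y) (hP y) hP _ _ fun z => hg.cons_diff a b _
          _ = c := chainExp_const Pm hProw (Pm y) (hProw y) c
      calc (∑ y, Pm a y * (H a y - H b y)) ≤ ∑ y, Pm a y * c :=
            Finset.sum_le_sum fun y _ => mul_le_mul_of_nonneg_left (hdiff y) (hP a y)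
        _ = c := by rw [← Finset.sum_mul, hProw, one_mul]
    have hterm2 : (∑ y, (Pm a y - Pm b y) * H b y) ≤ r * (c / (1 - r)) := by
      refine pairing (Pm a) (Pm b) (H b) r (c / (1 - r)) (hrTV a b) ?_ (hProw a) (hProw b)
      intro y z
      exact ih (fun w : Fin (m + 1) → Fin K => g (Fin.cons b w)) (hg.cons b) y z
    rw [hsplit]
    have : c + r * (c / (1 - r)) = c / (1 - r) := by field_simp; ring
    linarith

lemma mgf_le (hK : 0 < K) (hP : ∀ i j, 0 ≤ Pm i j) (hProw : ∀ i, ∑ j, Pm i j = 1)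
    (r : ℝ) (hrTV : ∀ i j, ∑ l, |Pm i l - Pm j l| ≤ 2 * r) (hr1 : r < 1)
    {c : ℝ} (hc : 0 ≤ c) (t : ℝ) :
    ∀ (n : ℕ) (ρ : Fin K → ℝ), (∀ i, 0 ≤ ρ i) → (∑ i, ρ i = 1) →
      ∀ (g : (Fin n → Fin K) → ℝ), Lip1 c g →
      chainExp ρ Pm (fun x => Real.exp (t * g x)) ≤
        Real.exp (t * chainExp ρ Pm g + t ^ 2 * n * (c / (1 - r)) ^ 2 / 8) := by
  have : Nonempty (Fin K) := ⟨⟨0, hK⟩⟩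
  have hr0 : 0 ≤ r := by
    have := hrTV ⟨0, hK⟩ ⟨0, hK⟩
    simp at this
    linarith
  have h1r : 0 < 1 - r := by linarith
  have hB : 0 ≤ c / (1 - r) := div_nonneg hc (le_of_lt h1r)
  intro n
  induction n with
  | zero =>
    intro ρ hρ hρ1 g hg
    rw [chainExp_zero, chainExp_zero]
    simp
  | succ m ih =>
    intro ρ hρ hρ1 g hg
    rw [chainExp_succ, chainExp_succ]
    set F : Fin K → ℝ := fun a => chainExp (Pm a) Pm (fun y => g (Fin.cons a y)) with hF
    have hstep1 : (∑ a, ρ a * chainExp (Pm a) Pm (fun y => Real.exp (t * g (Fin.cons a y))))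
        ≤ ∑ a, ρ a * (Real.exp (t * F a + t ^ 2 * m * (c / (1 - r)) ^ 2 / 8)) := by
      refine Finset.sum_le_sum fun a _ => mul_le_mul_of_nonneg_left ?_ (hρ a)
      exact ih (Pm a) (hP a) (hProw a) (fun y => g (Fin.cons a y)) (hg.cons a)
    -- Hoeffding step on F
    set S := Finset.univ.image F with hS
    have hSne : S.Nonempty := ⟨F (Classical.arbitrary (Fin K)),
      Finset.mem_image_of_mem F (mem_univ _)⟩
    set mF := S.min' hSne with hmF
    obtain ⟨a0, -, ha0⟩ := Finset.mem_image.mp (S.min'_mem hSne)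
    have hlb : ∀ a, mF ≤ F a := fun a => S.min'_le (F a) (Finset.mem_image_of_mem F (mem_univ _))
    have hub : ∀ a, F a ≤ mF + c / (1 - r) := by
      intro a
      have h2 : F a - F a0 ≤ c / (1 - r) :=
        osc_le Pm hK hP hProw r hrTV hr1 hc m g hg a a0
      rw [hmF, ← ha0]
      linarith
    have hhoef := finHoeffding ρ F hρ hρ1 mF (c / (1 - r)) t hB (fun a => ⟨hlb a, hub a⟩)
    calc (∑ a, ρ a * chainExp (Pm a) Pm (fun y => Real.exp (t * g (Fin.cons a y))))
        ≤ ∑ a, ρ a * (Real.exp (t * F a + t ^ 2 * m * (c / (1 - r)) ^ 2 / 8)) := hstep1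
      _ = Real.exp (t ^ 2 * m * (c / (1 - r)) ^ 2 / 8) * ∑ a, ρ a * Real.exp (t * F a) := by
          rw [Finset.mul_sum]
          refine Finset.sum_congr rfl fun a _ => ?_
          rw [Real.exp_add]
          ring
      _ ≤ Real.exp (t ^ 2 * m * (c / (1 - r)) ^ 2 / 8) *
            Real.exp (t * (∑ a, ρ a * F a) + t ^ 2 * (c / (1 - r)) ^ 2 / 8) :=
          mul_le_mul_of_nonneg_left hhoef (le_of_lt (Real.exp_pos _))
      _ = Real.exp (t * (∑ a, ρ a * F a) + t ^ 2 * (m + 1 : ℕ) * (c / (1 - r)) ^ 2 / 8) := by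
          rw [← Real.exp_add]
          congr 1
          push_cast
          ring

end Main



section Final
variable {K : ℕ} (Pm : Fin K → Fin K → ℝ)

lemma chainExp_first (hProw : ∀ i, ∑ j, Pm i j = 1) (ρ : Fin K → ℝ) {m : ℕ}
    (h : Fin K → ℝ) :
    chainExp ρ Pm (fun x : Fin (m + 1) → Fin K => h (x 0)) = ∑ a, ρ a * h a := by
  rw [chainExp_succ]
  refine Finset.sum_congr rfl fun a _ => ?_
  congr 1
  have he : (fun y : Fin m → Fin K => h ((Fin.cons a y : Fin (m+1) → Fin K) 0))
      = fun _ : Fin m → Fin K => h a := by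
    funext y; simp
  rw [he]
  exact chainExp_const Pm hProw (Pm a) (hProw a) (h a)

lemma chernoff (ρ : Fin K → ℝ) (hρ : ∀ i, 0 ≤ ρ i) (hP : ∀ i j, 0 ≤ Pm i j) {n : ℕ}
    (f : (Fin n → Fin K) → ℝ) (ε t : ℝ) (ht : 0 ≤ t) :
    chainProb ρ Pm {x | ε ≤ f x} ≤
      Real.exp (-(t * ε)) * chainExp ρ Pm (fun x => Real.exp (t * f x)) := by
  rw [chainProb, chainExp, Finset.mul_sum]
  refine Finset.sum_le_sum fun x _ => ?_
  have hm := chainMass_nonneg Pm ρ hρ hP x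
  by_cases hx : x ∈ {x | ε ≤ f x}
  · rw [if_pos hx]
    have hfx : ε ≤ f x := hx
    have h1 : (1 : ℝ) ≤ Real.exp (-(t * ε)) * Real.exp (t * f x) := by
      rw [← Real.exp_add]
      refine Real.one_le_exp ?_
      nlinarith
    calc chainMass ρ Pm x = chainMass ρ Pm x * 1 := (mul_one _).symm
      _ ≤ chainMass ρ Pm x * (Real.exp (-(t * ε)) * Real.exp (t * f x)) :=
          mul_le_mul_of_nonneg_left h1 hm
      _ = Real.exp (-(t * ε)) * (chainMass ρ Pm x * Real.exp (t * f x)) := by ring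
  · rw [if_neg hx]
    positivity

lemma change_of_measure {n : ℕ} (hn : 0 < n) (ϱ π : Fin K → ℝ) (hϱ : ∀ i, 0 ≤ ϱ i)
    (hπpos : ∀ i, 0 < π i) (hP : ∀ i j, 0 ≤ Pm i j) (hProw : ∀ i, ∑ j, Pm i j = 1)
    (A : Set (Fin n → Fin K)) :
    chainProb ϱ Pm A ≤ nsIndex ϱ π * Real.sqrt (chainProb π Pm A) := by
  obtain ⟨m, rfl⟩ : ∃ m, n = m + 1 := ⟨n - 1, by omega⟩
  have hπnn : ∀ i, 0 ≤ π i := fun i => le_of_lt (hπpos i)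
  set u : (Fin (m + 1) → Fin K) → ℝ :=
    fun x => Real.sqrt (chainMass π Pm x) * (ϱ (x 0) / π (x 0)) with hu
  set v : (Fin (m + 1) → Fin K) → ℝ :=
    fun x => if x ∈ A then Real.sqrt (chainMass π Pm x) else 0 with hv
  have hmass : ∀ x : Fin (m + 1) → Fin K,
      chainMass ϱ Pm x = (ϱ (x 0) / π (x 0)) * chainMass π Pm x := by
    intro x
    rw [chainMass, chainMass]
    rw [dif_pos (Nat.succ_pos m), dif_pos (Nat.succ_pos m)]
    have h0 : x ⟨0, Nat.succ_pos m⟩ = x 0 := by congr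
    rw [h0]
    have hπ0 : π (x 0) ≠ 0 := ne_of_gt (hπpos (x 0))
    field_simp
  have hlhs : chainProb ϱ Pm A = ∑ x, u x * v x := by
    rw [chainProb]
    refine Finset.sum_congr rfl fun x _ => ?_
    by_cases hx : x ∈ A
    · rw [if_pos hx]
      show chainMass ϱ Pm x = (Real.sqrt (chainMass π Pm x) * (ϱ (x 0) / π (x 0))) *
        (if x ∈ A then Real.sqrt (chainMass π Pm x) else 0)
      rw [if_pos hx, hmass x]
      rw [mul_comm (Real.sqrt _) _, mul_assoc,
        Real.mul_self_sqrt (chainMass_nonneg Pm π hπnn hP x)]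
    · simp [hx, hv]
  have hCS := Finset.sum_mul_sq_le_sq_mul_sq Finset.univ u v
  have husq : ∑ x, u x ^ 2 = ∑ i, ϱ i ^ 2 / π i := by
    have hpw : ∀ x : Fin (m + 1) → Fin K, u x ^ 2 =
        chainMass π Pm x * (ϱ (x 0) / π (x 0)) ^ 2 := by
      intro x
      rw [hu]
      rw [mul_pow, Real.sq_sqrt (chainMass_nonneg Pm π hπnn hP x)]
    rw [Finset.sum_congr rfl fun x _ => hpw x]
    have hrw : (∑ x : Fin (m + 1) → Fin K, chainMass π Pm x * (ϱ (x 0) / π (x 0)) ^ 2)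
        = ∑ a, π a * (ϱ a / π a) ^ 2 := chainExp_first Pm hProw π (fun a => (ϱ a / π a) ^ 2)
    rw [hrw]
    refine Finset.sum_congr rfl fun i _ => ?_
    have hπ0 : π i ≠ 0 := ne_of_gt (hπpos i)
    field_simp
  have hvsq : ∑ x, v x ^ 2 = chainProb π Pm A := by
    rw [chainProb]
    refine Finset.sum_congr rfl fun x _ => ?_
    show (if x ∈ A then Real.sqrt (chainMass π Pm x) else 0) ^ 2 = _
    by_cases hx : x ∈ A
    · simp only [if_pos hx]
      exact Real.sq_sqrt (chainMass_nonneg Pm π hπnn hP x)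
    · simp [hx]
  have hsum_nonneg : 0 ≤ ∑ x, u x * v x := by
    rw [← hlhs, chainProb]
    refine Finset.sum_nonneg fun x _ => ?_
    by_cases hx : x ∈ A
    · rw [if_pos hx]; exact chainMass_nonneg Pm ϱ hϱ hP x
    · rw [if_neg hx]
  rw [hlhs]
  have := Real.sqrt_le_sqrt hCS
  rw [Real.sqrt_sq hsum_nonneg] at this
  calc ∑ x, u x * v x ≤ Real.sqrt ((∑ x, u x ^ 2) * ∑ x, v x ^ 2) := this
    _ = Real.sqrt (∑ x, u x ^ 2) * Real.sqrt (∑ x, v x ^ 2) :=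
        Real.sqrt_mul (Finset.sum_nonneg fun x _ => sq_nonneg _) _
    _ = nsIndex ϱ π * Real.sqrt (chainProb π Pm A) := by rw [husq, hvsq, nsIndex]

end Final



lemma lp_lip {K n : ℕ} (hn : 0 < n) (π : Fin K → ℝ) (p : ℝ) (hp : 1 ≤ p) :
    Lip1 ((2 : ℝ) ^ (1 / p) / n)
      (fun x : Fin n → Fin K => lpNorm p (fun i => empMeas x i - π i)) := by
  intro x y k hxy
  have hp0 : p ≠ 0 := ne_of_gt (lt_of_lt_of_le zero_lt_one hp)
  have hppos : 0 ≤ p := le_trans zero_le_one hp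
  have hnpos : (0 : ℝ) < n := by exact_mod_cast hn
  set d : Fin K → ℝ := fun i => empMeas x i - empMeas y i with hd
  have hdi : ∀ i, d i = ((if x k = i then (1 : ℝ) else 0) - (if y k = i then 1 else 0)) / n := by
    intro i
    show empMeas x i - empMeas y i = _
    rw [empMeas, empMeas, div_sub_div_same]
    congr 1
    rw [← Finset.sum_sub_distrib]
    refine Finset.sum_eq_single k (fun j _ hj => by rw [hxy j hj]; ring)
      (fun h => absurd (Finset.mem_univ k) h)
  have habs : ∀ i, |d i| ≤ 1 / n := by
    intro i
    rw [hdi, abs_div, abs_of_nonneg (le_of_lt hnpos)]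
    gcongr
    split_ifs <;> norm_num
  have hzero : ∀ i, i ≠ x k → i ≠ y k → d i = 0 := by
    intro i h1 h2
    rw [hdi, if_neg (fun h => h1 h.symm), if_neg (fun h => h2 h.symm)]
    simp
  have hsum : ∑ i, |d i| ^ p ≤ 2 * ((1 : ℝ) / n) ^ p := by
    have hpt : ∀ i, |d i| ^ p ≤
        (if i = x k then ((1 : ℝ) / n) ^ p else 0) + (if i = y k then ((1 : ℝ) / n) ^ p else 0) := by
      intro i
      have hnn : (0:ℝ) ≤ (if i = y k then ((1 : ℝ) / n) ^ p else 0) := by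
        split
        · positivity
        · norm_num
      have hnn' : (0:ℝ) ≤ (if i = x k then ((1 : ℝ) / n) ^ p else 0) := by
        split
        · positivity
        · norm_num
      by_cases h1 : i = x k
      · rw [if_pos h1]
        have := Real.rpow_le_rpow (abs_nonneg (d i)) (habs i) hppos
        linarith
      · by_cases h2 : i = y k
        · rw [if_neg h1, if_pos h2]
          have := Real.rpow_le_rpow (abs_nonneg (d i)) (habs i) hppos
          linarith
        · rw [hzero i h1 h2]
          rw [abs_zero, Real.zero_rpow hp0]
          linarith
    calc ∑ i, |d i| ^ p ≤ ∑ i, ((if i = x k then ((1 : ℝ) / n) ^ p else 0) +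
          (if i = y k then ((1 : ℝ) / n) ^ p else 0)) := Finset.sum_le_sum fun i _ => hpt i
      _ = 2 * ((1 : ℝ) / n) ^ p := by
          rw [Finset.sum_add_distrib, Finset.sum_ite_eq' Finset.univ (x k),
            Finset.sum_ite_eq' Finset.univ (y k)]
          simp
          ring
  have hbd : lpNorm p d ≤ (2 : ℝ) ^ (1 / p) / n := by
    rw [lpNorm]
    have h1 : (∑ i, |d i| ^ p) ^ (1 / p) ≤ (2 * ((1 : ℝ) / n) ^ p) ^ (1 / p) :=
      Real.rpow_le_rpow (Finset.sum_nonneg fun i _ => Real.rpow_nonneg (abs_nonneg _) p)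
        hsum (by positivity)
    have h2 : (2 * ((1 : ℝ) / n) ^ p) ^ (1 / p) = (2 : ℝ) ^ (1 / p) / n := by
      rw [Real.mul_rpow (by norm_num) (Real.rpow_nonneg (by positivity) p)]
      rw [← Real.rpow_mul (by positivity : (0:ℝ) ≤ 1 / n), mul_one_div_cancel hp0,
        Real.rpow_one, mul_one_div]
    rw [h2] at h1
    exact h1
  have htri : lpNorm p (fun i => empMeas x i - π i) ≤
      lpNorm p (fun i => empMeas y i - π i) + lpNorm p d := by
    have hLp := Real.Lp_add_le Finset.univ (fun i => empMeas y i - π i) d hp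
    have hfg : ∀ i, empMeas x i - π i = (empMeas y i - π i) + d i := by
      intro i; rw [hd]; ring
    rw [lpNorm, lpNorm, lpNorm]
    calc (∑ i, |empMeas x i - π i| ^ p) ^ (1 / p)
        = (∑ i, |(empMeas y i - π i) + d i| ^ p) ^ (1 / p) := by
          congr 1; exact Finset.sum_congr rfl fun i _ => by rw [hfg i]
      _ ≤ _ := hLp
  simp only
  linarith


theorem stmt13 {K n : ℕ} (hK : 0 < K) (hn : 0 < n)
    (Pm : Fin K → Fin K → ℝ)
    (hPnn : ∀ i j, 0 ≤ Pm i j) (hProw : ∀ i, ∑ j, Pm i j = 1)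
    (r : ℝ) (hrdef : r = dobrushin Pm) (hr : r < 1)
    (ϱ : Fin K → ℝ) (hϱnn : ∀ i, 0 ≤ ϱ i) (hϱsum : ∑ i, ϱ i = 1)
    (π : Fin K → ℝ) (hπpos : ∀ i, 0 < π i) (hπsum : ∑ i, π i = 1)
    (hπstat : ∀ j, ∑ i, π i * Pm i j = π j)
    (p : ℝ) (hp : 1 ≤ p) (ε : ℝ)
    (hε : chainExp π Pm (fun x' : Fin n → Fin K => lpNorm p (fun i => empMeas x' i - π i)) < ε) :
    chainProb ϱ Pm {x : Fin n → Fin K | ε ≤ lpNorm p (fun i => empMeas x i - π i)} ≤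
      nsIndex ϱ π * Real.exp (-((2 : ℝ) ^ (-(2 / p)) * n *
        (ε - chainExp π Pm
          (fun x' : Fin n → Fin K => lpNorm p (fun i => empMeas x' i - π i))) ^ 2 *
        (1 - r) ^ 2)) := by
  have hπnn : ∀ i, 0 ≤ π i := fun i => le_of_lt (hπpos i)
  have hp0 : p ≠ 0 := ne_of_gt (lt_of_lt_of_le zero_lt_one hp)
  have hnpos : (0 : ℝ) < n := by exact_mod_cast hn
  -- Dobrushin coefficient facts
  have hrTV : ∀ i j, ∑ l, |Pm i l - Pm j l| ≤ 2 * r := by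
    intro i j
    have hbdd2 : ∀ i', BddAbove (Set.range fun j' => (1/2 : ℝ) * ∑ l, |Pm i' l - Pm j' l|) :=
      fun i' => Set.Finite.bddAbove (Set.finite_range _)
    have h1 : (1/2 : ℝ) * ∑ l, |Pm i l - Pm j l| ≤ r := by
      rw [hrdef, dobrushin]
      calc (1/2 : ℝ) * ∑ l, |Pm i l - Pm j l|
          ≤ ⨆ j', (1/2 : ℝ) * ∑ l, |Pm i l - Pm j' l| := le_ciSup (hbdd2 i) j
        _ ≤ ⨆ i', ⨆ j', (1/2 : ℝ) * ∑ l, |Pm i' l - Pm j' l| :=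
            le_ciSup (f := fun i' => ⨆ j', (1/2 : ℝ) * ∑ l, |Pm i' l - Pm j' l|)
              (Set.Finite.bddAbove (Set.finite_range _)) i
    linarith
  set f : (Fin n → Fin K) → ℝ :=
    fun x' => lpNorm p (fun i => empMeas x' i - π i) with hfdef
  rw [show {x : Fin n → Fin K | ε ≤ lpNorm p (fun i => empMeas x i - π i)}
    = {x | ε ≤ f x} from rfl]
  set m' := chainExp π Pm f with hm'
  set δ := ε - m' with hδdef
  have hδ : 0 < δ := by rw [hδdef]; linarith [hε]
  set c2 : ℝ := (2 : ℝ) ^ (1/p : ℝ) with hc2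
  have hc2pos : 0 < c2 := Real.rpow_pos_of_pos (by norm_num) _
  set c : ℝ := c2 / n with hcdef
  have hcpos : 0 < c := div_pos hc2pos hnpos
  have h1r : 0 < 1 - r := by linarith
  set B : ℝ := c / (1 - r) with hBdef
  have hBpos : 0 < B := div_pos hcpos h1r
  have hlip : Lip1 c f := lp_lip hn π p hp
  set t : ℝ := 4 * δ / (n * B ^ 2) with htdef
  have ht0 : 0 ≤ t := le_of_lt (by positivity)
  -- Chernoff + MGF bound for the stationary start
  have hPπ : chainProb π Pm {x | ε ≤ f x} ≤ Real.exp (-(2 * δ ^ 2 / (n * B ^ 2))) := by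
    calc chainProb π Pm {x | ε ≤ f x}
        ≤ Real.exp (-(t * ε)) * chainExp π Pm (fun x => Real.exp (t * f x)) :=
          chernoff Pm π hπnn hPnn f ε t ht0
      _ ≤ Real.exp (-(t * ε)) * Real.exp (t * m' + t ^ 2 * n * (c / (1 - r)) ^ 2 / 8) := by
          refine mul_le_mul_of_nonneg_left ?_ (le_of_lt (Real.exp_pos _))
          exact mgf_le Pm hK hPnn hProw r hrTV hr (le_of_lt hcpos) t n π hπnn hπsum f hlip
      _ = Real.exp (-(t * ε) + (t * m' + t ^ 2 * n * (c / (1 - r)) ^ 2 / 8)) :=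
          (Real.exp_add _ _).symm
      _ = Real.exp (-(2 * δ ^ 2 / (n * B ^ 2))) := by
          congr 1
          rw [show (c / (1 - r)) = B from hBdef.symm]
          rw [htdef, hδdef]
          have hBne : B ≠ 0 := ne_of_gt hBpos
          have hnne : (n : ℝ) ≠ 0 := ne_of_gt hnpos
          field_simp
          ring
  -- Change of measure
  have hCM := change_of_measure Pm hn ϱ π hϱnn hπpos hPnn hProw {x | ε ≤ f x}
  -- sqrt of the exponential bound
  have hsqrt : Real.sqrt (chainProb π Pm {x | ε ≤ f x}) ≤ Real.exp (-(δ ^ 2 / (n * B ^ 2))) := by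
    calc Real.sqrt (chainProb π Pm {x | ε ≤ f x})
        ≤ Real.sqrt (Real.exp (-(2 * δ ^ 2 / (n * B ^ 2)))) := Real.sqrt_le_sqrt hPπ
      _ = Real.exp (-(δ ^ 2 / (n * B ^ 2))) := by
          rw [show -(2 * δ ^ 2 / (↑n * B ^ 2))
            = -(δ ^ 2 / (↑n * B ^ 2)) + -(δ ^ 2 / (↑n * B ^ 2)) by ring]
          rw [Real.exp_add]
          exact Real.sqrt_mul_self (le_of_lt (Real.exp_pos _))
  -- final exponent identity
  have hexp : -(δ ^ 2 / (n * B ^ 2)) = -((2 : ℝ) ^ (-(2/p) : ℝ) * n * δ ^ 2 * (1 - r) ^ 2) := by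
    have h2 : c2 ^ 2 = (2 : ℝ) ^ (2/p : ℝ) := by
      rw [hc2, sq, ← Real.rpow_add (by norm_num : (0:ℝ) < 2)]
      congr 1
      ring
    rw [Real.rpow_neg (by norm_num : (0:ℝ) ≤ 2), ← h2]
    rw [hBdef, hcdef]
    have hc2ne : c2 ≠ 0 := ne_of_gt hc2pos
    have hnne : (n : ℝ) ≠ 0 := ne_of_gt hnpos
    have h1rne : (1 : ℝ) - r ≠ 0 := ne_of_gt h1r
    field_simp
  have hns : 0 ≤ nsIndex ϱ π := Real.sqrt_nonneg _
  calc chainProb ϱ Pm {x | ε ≤ f x}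
      ≤ nsIndex ϱ π * Real.sqrt (chainProb π Pm {x | ε ≤ f x}) := hCM
    _ ≤ nsIndex ϱ π * Real.exp (-(δ ^ 2 / (n * B ^ 2))) :=
        mul_le_mul_of_nonneg_left hsqrt hns
    _ = nsIndex ϱ π * Real.exp (-((2 : ℝ) ^ (-(2/p) : ℝ) * n * δ ^ 2 * (1 - r) ^ 2)) := by
        rw [hexp]
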